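/- arXiv:2012.03304 — 3 statements merged into one kernel-verified Lean document; each statement's English description precedes it below -/
import Mathlib

section
/- Let m be an automorphism of 𝔻 written as m = r_τ ∘ b_α with α ∈ 𝔻, τ ∈ 𝕋, and assume |τ - 1| < 2|α|. Then m, viewed as a continuous self-map of the closed disc, has exactly two fixed points, both lying on the unit circle 𝕋. -/
/-!
Writing `τ = σ²` with `|σ| = 1`, the fixed-point equation of `z ↦ τ b_α(z)` on the closed disc is the
quadratic `ᾱ z² + (τ - 1) z - τ α = 0`, whose discriminant is `(2 σ r)²` with
`r = √(|α|² - (Im σ)²)`. Since `τ - 1 = 2 σ (Im σ) i` and `|τ - 1| = 2 |Im σ|`, the hypothesis says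
exactly that `r > 0`, so there are two distinct roots `σ (± r - (Im σ) i) / ᾱ`, each of modulus
`√(r² + (Im σ)²) / |α| = 1`.
-/

open Complex ComplexConjugate

namespace Complex

lemma exists_sq_eq_and_norm_eq_one {τ : ℂ} (hτ : ‖τ‖ = 1) : ∃ σ : ℂ, σ ^ 2 = τ ∧ ‖σ‖ = 1 := by
  obtain ⟨σ, hσ⟩ := IsAlgClosed.exists_pow_nat_eq τ two_pos
  refine ⟨σ, hσ, ?_⟩
  have h : ‖σ‖ ^ 2 = 1 := by rw [← norm_pow, hσ, hτ]
  exact (pow_eq_one_iff_of_nonneg (norm_nonneg σ) two_ne_zero).1 h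

lemma sq_sub_one_of_norm_eq_one {σ : ℂ} (hσ : ‖σ‖ = 1) : σ ^ 2 - 1 = 2 * σ * (σ.im * I) := by
  have hconj : σ * conj σ = 1 := by rw [mul_conj, normSq_eq_norm_sq, hσ]; norm_num
  have hsub := sub_conj σ
  push_cast at hsub
  linear_combination σ * hsub + hconj

lemma norm_sq_sub_one_of_norm_eq_one {σ : ℂ} (hσ : ‖σ‖ = 1) : ‖σ ^ 2 - 1‖ = 2 * |σ.im| := by
  rw [sq_sub_one_of_norm_eq_one hσ]
  simp [hσ]

lemma one_sub_conj_mul_ne_zero {α z : ℂ} (hα : ‖α‖ < 1) (hz : ‖z‖ ≤ 1) : 1 - conj α * z ≠ 0 := by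
  intro h
  have : ‖conj α * z‖ < 1 := by
    rw [norm_mul, norm_conj]
    nlinarith [norm_nonneg α, norm_nonneg z]
  rw [← sub_eq_zero.1 h, norm_one] at this
  exact lt_irrefl _ this

lemma mul_blaschke_eq_self_iff {α τ z : ℂ} (hz : 1 - conj α * z ≠ 0) :
    τ * ((z - α) / (1 - conj α * z)) = z ↔ conj α * (z * z) + (τ - 1) * z + -(τ * α) = 0 := by
  rw [← mul_div_assoc, div_eq_iff hz, ← sub_eq_zero]
  constructor <;> intro h <;> linear_combination h

lemma discrim_blaschke_fixedPoint {α σ : ℂ} (hσ : ‖σ‖ = 1) {r : ℝ}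
    (hr : r ^ 2 = ‖α‖ ^ 2 - σ.im ^ 2) :
    discrim (conj α) (σ ^ 2 - 1) (-(σ ^ 2 * α)) = (2 * σ * r) * (2 * σ * r) := by
  have hαα : conj α * α = ((‖α‖ ^ 2 : ℝ) : ℂ) := by rw [mul_comm, mul_conj, normSq_eq_norm_sq]
  have hr' : (r : ℂ) ^ 2 = ((‖α‖ ^ 2 : ℝ) : ℂ) - (σ.im : ℂ) ^ 2 := by exact_mod_cast hr
  rw [discrim, sq_sub_one_of_norm_eq_one hσ]
  linear_combination (4 * σ ^ 2) * hαα - (4 * σ ^ 2) * hr' + (4 * σ ^ 2 * (σ.im : ℂ) ^ 2) * I_sq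

lemma norm_blaschke_fixedPoint {α σ : ℂ} (hσ : ‖σ‖ = 1) (hα : α ≠ 0) {r : ℝ}
    (hr : r ^ 2 = ‖α‖ ^ 2 - σ.im ^ 2) :
    ‖(-(σ ^ 2 - 1) + 2 * σ * r) / (2 * conj α)‖ = 1 := by
  have hnum : -(σ ^ 2 - 1) + 2 * σ * r = 2 * σ * (r + (-σ.im : ℝ) * I) := by
    rw [sq_sub_one_of_norm_eq_one hσ]; push_cast; ring
  have hsq : r ^ 2 + (-σ.im) ^ 2 = ‖α‖ ^ 2 := by linarith
  rw [hnum, norm_div, norm_mul, norm_mul, norm_add_mul_I, hsq, Real.sqrt_sq (norm_nonneg α)]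
  simp [hσ, norm_ne_zero_iff.2 hα]

end Complex

theorem hyperbolic_two_fixed_points (α τ : ℂ) (hα : ‖α‖ < 1) (hτ : ‖τ‖ = 1)
    (hhyp : ‖τ - 1‖ < 2 * ‖α‖) :
    ∃ η₁ η₂ : ℂ, η₁ ≠ η₂ ∧ ‖η₁‖ = 1 ∧ ‖η₂‖ = 1 ∧
      ∀ z : ℂ, ‖z‖ ≤ 1 →
        (τ * ((z - α) / (1 - (starRingEnd ℂ) α * z)) = z ↔ z = η₁ ∨ z = η₂) := by
  obtain ⟨σ, rfl, hσ⟩ := exists_sq_eq_and_norm_eq_one hτ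
  rw [norm_sq_sub_one_of_norm_eq_one hσ] at hhyp
  have him : σ.im ^ 2 < ‖α‖ ^ 2 := by rw [sq_lt_sq, abs_norm]; linarith
  have hα0 : α ≠ 0 := norm_pos_iff.1 (by linarith [abs_nonneg σ.im])
  set r := √(‖α‖ ^ 2 - σ.im ^ 2)
  have hr : r ^ 2 = ‖α‖ ^ 2 - σ.im ^ 2 := Real.sq_sqrt (by linarith)
  have hσr : 2 * σ * r ≠ 0 := by
    have hσ0 : σ ≠ 0 := norm_ne_zero_iff.1 (by rw [hσ]; exact one_ne_zero)
    have hr0 : r ≠ 0 := (Real.sqrt_pos.2 (by linarith)).ne'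
    simp [hσ0, hr0]
  refine ⟨(-(σ ^ 2 - 1) + 2 * σ * r) / (2 * conj α), (-(σ ^ 2 - 1) - 2 * σ * r) / (2 * conj α),
    ?_, norm_blaschke_fixedPoint hσ hα0 hr, ?_, fun z hz => ?_⟩
  · rw [Ne, div_left_inj' (by simpa using hα0)]
    intro h
    exact hσr (by linear_combination h / 2)
  · simpa [sub_eq_add_neg] using norm_blaschke_fixedPoint hσ hα0 (r := -r) (by rw [neg_sq, hr])
  · rw [mul_blaschke_eq_self_iff (one_sub_conj_mul_ne_zero hα hz),
      quadratic_eq_zero_iff (by simpa using hα0) (discrim_blaschke_fixedPoint hσ hr)]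
end

section
/- For every ω ∈ 𝕋, the function Φ_ω(s, p) = (2ωp - s)/(2 - ωs) maps the open symmetrized bidisc G into the open unit disc 𝔻, i.e., for all z, w ∈ 𝔻, |(2ω·zw - (z+w))/(2 - ω(z+w))| < 1. -/
open Complex

/-! Multiplying `z` and `w` by the unimodular `ω` rotates the numerator by `ω` and turns the
denominator into `2 - (ωz + ωw)`, so it suffices to treat `ω = 1`. There, with `s = a + b` and
`p = ab`, the identity
`|2 - s|² - |2p - s|² = 2(1 - |a|²)|1 - b|² + 2(1 - |b|²)|1 - a|²`
has a positive right-hand side for `a, b ∈ 𝔻`. -/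

theorem normSq_two_sub_add_sub_normSq_two_mul_mul_sub_add (a b : ℂ) :
    normSq (2 - (a + b)) - normSq (2 * a * b - (a + b)) =
      2 * (1 - normSq a) * normSq (1 - b) + 2 * (1 - normSq b) * normSq (1 - a) := by
  simp only [normSq_apply, sub_re, sub_im, add_re, add_im, mul_re, mul_im, re_ofNat, im_ofNat,
    one_re, one_im]
  ring

theorem norm_two_mul_mul_sub_add_lt_norm_two_sub_add {a b : ℂ} (ha : ‖a‖ < 1) (hb : ‖b‖ < 1) :
    ‖2 * a * b - (a + b)‖ < ‖2 - (a + b)‖ := by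
  have hna : normSq a < 1 := by
    rw [normSq_eq_norm_sq]
    exact pow_lt_one₀ (norm_nonneg a) ha two_ne_zero
  have hnb : normSq b < 1 := by
    rw [normSq_eq_norm_sq]
    exact pow_lt_one₀ (norm_nonneg b) hb two_ne_zero
  have h1a : 0 < normSq (1 - a) := by
    refine normSq_pos.2 (sub_ne_zero.2 ?_)
    rintro rfl
    simp at ha
  rw [norm_def, norm_def]
  apply Real.sqrt_lt_sqrt (normSq_nonneg _)
  nlinarith [normSq_two_sub_add_sub_normSq_two_mul_mul_sub_add a b, normSq_nonneg (1 - b)]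

theorem Phi_omega_maps_G_to_disc (ω z w : ℂ) (hω : ‖ω‖ = 1)
    (hz : ‖z‖ < 1) (hw : ‖w‖ < 1) :
    ‖(2 * ω * (z * w) - (z + w)) / (2 - ω * (z + w))‖ < 1 := by
  have hωz : ‖ω * z‖ < 1 := by rwa [norm_mul, hω, one_mul]
  have hωw : ‖ω * w‖ < 1 := by rwa [norm_mul, hω, one_mul]
  have hnum : ‖2 * (ω * z) * (ω * w) - (ω * z + ω * w)‖ = ‖2 * ω * (z * w) - (z + w)‖ := by
    rw [show 2 * (ω * z) * (ω * w) - (ω * z + ω * w) = ω * (2 * ω * (z * w) - (z + w)) by ring,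
      norm_mul, hω, one_mul]
  have key := norm_two_mul_mul_sub_add_lt_norm_two_sub_add hωz hωw
  rw [hnum, ← mul_add] at key
  rw [norm_div, div_lt_one ((norm_nonneg _).trans_lt key)]
  exact key
end

section
/- Let σ ∈ (0,1) and τ ∈ 𝕋 with τ ≠ -1, and let m = b_σ ∘ r_τ ∘ b_σ. Then m, extended continuously to the closed disc, has exactly two fixed points both on 𝕋 (is hyperbolic) if and only if |(τ-1)/(τ+1)| < 2σ/(1-σ²). -/
open Complex

/-!
On the closed disc the denominators do not vanish, and clearing them turns `m z = z` into
`σ (τ + 1) (z² + b z - 1) = 0` with `b = (1 - σ²)/σ · (τ - 1)/(τ + 1)`, which is purely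
imaginary because `|τ| = 1`.
The roots of `z² + b z - 1` have sum `-b`, so two distinct unimodular roots force
`|b| = |η₁ + η₂| < 2` by strict convexity of the norm. Conversely, if `|b| < 2` the roots
`(±√(4 - |b|²) - b) / 2` are distinct and, `b` being orthogonal to `ℝ`, of modulus one.
-/

noncomputable def blaschkeFactor (σ : ℝ) (z : ℂ) : ℂ := (z - σ) / (1 - σ * z)

lemma one_sub_ofReal_mul_ne_zero {σ : ℝ} (hσ : |σ| < 1) {w : ℂ} (hw : ‖w‖ ≤ 1) :
    1 - (σ : ℂ) * w ≠ 0 := by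
  intro h
  have : ‖(σ : ℂ) * w‖ < 1 := by
    rw [norm_mul, norm_real, Real.norm_eq_abs]
    nlinarith [abs_nonneg σ, norm_nonneg w]
  rw [← sub_eq_zero.mp h, norm_one] at this
  exact lt_irrefl _ this

lemma normSq_one_sub_mul_sub_normSq_sub (σ : ℝ) (z : ℂ) :
    normSq (1 - σ * z) - normSq (z - σ) = (1 - σ ^ 2) * (1 - normSq z) := by
  simp only [normSq_apply, sub_re, sub_im, mul_re, mul_im, ofReal_re, ofReal_im, one_re, one_im]
  ring

lemma norm_blaschkeFactor_le_one {σ : ℝ} (hσ : |σ| < 1) {z : ℂ} (hz : ‖z‖ ≤ 1) :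
    ‖blaschkeFactor σ z‖ ≤ 1 := by
  have hden := one_sub_ofReal_mul_ne_zero hσ hz
  rw [blaschkeFactor, norm_div, div_le_one (norm_pos_iff.mpr hden), ← sq_le_sq₀ (norm_nonneg _)
    (norm_nonneg _), ← normSq_eq_norm_sq, ← normSq_eq_norm_sq, ← sub_nonneg,
    normSq_one_sub_mul_sub_normSq_sub, normSq_eq_norm_sq]
  have : σ ^ 2 < 1 := by nlinarith [sq_abs σ, abs_nonneg σ]
  exact mul_nonneg (by linarith) (by nlinarith [norm_nonneg z])

lemma blaschkeFactor_mul_blaschkeFactor_eq_self_iff {σ : ℝ} (hσ : |σ| < 1) {τ z : ℂ}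
    (hτ : ‖τ‖ ≤ 1) (hz : ‖z‖ ≤ 1) :
    blaschkeFactor σ (τ * blaschkeFactor σ z) = z ↔
      σ * (τ + 1) * z ^ 2 + (1 - σ ^ 2) * (τ - 1) * z - σ * (τ + 1) = 0 := by
  have hw : ‖τ * blaschkeFactor σ z‖ ≤ 1 := by
    rw [norm_mul]; exact mul_le_one₀ hτ (norm_nonneg _) (norm_blaschkeFactor_le_one hσ hz)
  have h₁ := one_sub_ofReal_mul_ne_zero hσ hz
  have h₂ := one_sub_ofReal_mul_ne_zero hσ hw
  have key : (τ * blaschkeFactor σ z - σ - z * (1 - σ * (τ * blaschkeFactor σ z))) * (1 - σ * z) =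
      σ * (τ + 1) * z ^ 2 + (1 - σ ^ 2) * (τ - 1) * z - σ * (τ + 1) := by
    have hb : blaschkeFactor σ z * (1 - σ * z) = z - σ := div_mul_cancel₀ _ h₁
    linear_combination (τ * (1 + σ * z)) * hb
  rw [blaschkeFactor, div_eq_iff h₂, ← sub_eq_zero, ← key, mul_eq_zero, or_iff_left h₁]

lemma re_sub_one_div_add_one {τ : ℂ} (hτ : ‖τ‖ = 1) : ((τ - 1) / (τ + 1)).re = 0 := by
  have : τ.re * τ.re + τ.im * τ.im = 1 := by
    rw [← normSq_apply, normSq_eq_norm_sq, hτ, one_pow]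
  rw [div_re, ← add_div]
  simp only [sub_re, add_re, sub_im, add_im, one_re, one_im]
  rw [div_eq_zero_iff]; left; linear_combination this

lemma sq_eq_neg_norm_sq_of_re_eq_zero {b : ℂ} (hb : b.re = 0) : b ^ 2 = -(‖b‖ ^ 2 : ℝ) := by
  rw [← normSq_eq_norm_sq, normSq_apply, hb]
  apply Complex.ext <;> simp [sq, hb]

lemma add_eq_neg_of_quadratic_roots {R : Type*} [CommRing R] [IsDomain R] {b c x y : R}
    (hxy : x ≠ y) (hx : x ^ 2 + b * x = c) (hy : y ^ 2 + b * y = c) : x + y = -b := by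
  have : (x - y) * (x + y + b) = 0 := by linear_combination hx - hy
  linear_combination (mul_eq_zero.mp this).resolve_left (sub_ne_zero.mpr hxy)

lemma norm_add_lt_two_of_ne {x y : ℂ} (hxy : x ≠ y) (hx : ‖x‖ = 1) (hy : ‖y‖ = 1) :
    ‖x + y‖ < 2 := by
  have := norm_add_lt_of_not_sameRay (mt (sameRay_iff_of_norm_eq (hx.trans hy.symm)).mp hxy)
  rwa [hx, hy, one_add_one_eq_two] at this

lemma norm_ofReal_sub_of_re_eq_zero {b : ℂ} (hb : b.re = 0) (x : ℝ) :
    ‖(x : ℂ) - b‖ ^ 2 = x ^ 2 + ‖b‖ ^ 2 := by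
  simp only [← normSq_eq_norm_sq, normSq_apply, sub_re, sub_im, ofReal_re, ofReal_im, hb]
  ring

lemma exists_two_unit_roots_iff {b : ℂ} (hb : b.re = 0) :
    (∃ η₁ η₂ : ℂ, η₁ ≠ η₂ ∧ ‖η₁‖ = 1 ∧ ‖η₂‖ = 1 ∧
        ∀ z : ℂ, ‖z‖ ≤ 1 → (z ^ 2 + b * z - 1 = 0 ↔ z = η₁ ∨ z = η₂)) ↔ ‖b‖ < 2 := by
  constructor
  · rintro ⟨η₁, η₂, hne, h₁, h₂, hroots⟩
    have root : ∀ η : ℂ, ‖η‖ = 1 → (η = η₁ ∨ η = η₂) → η ^ 2 + b * η = 1 := fun η hη h =>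
      sub_eq_zero.mp ((hroots η hη.le).mpr h)
    have hsum := add_eq_neg_of_quadratic_roots hne (root η₁ h₁ (.inl rfl)) (root η₂ h₂ (.inr rfl))
    simpa [hsum] using norm_add_lt_two_of_ne hne h₁ h₂
  · intro hb2
    set q := √(4 - ‖b‖ ^ 2)
    have hq : q ^ 2 = 4 - ‖b‖ ^ 2 := Real.sq_sqrt (by nlinarith [norm_nonneg b])
    have hq0 : 0 < q := Real.sqrt_pos.mpr (by nlinarith [norm_nonneg b])
    have hunit : ∀ x : ℝ, x ^ 2 = q ^ 2 → ‖((x : ℂ) - b) / 2‖ = 1 := fun x hx => by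
      rw [norm_div, RCLike.norm_ofNat, div_eq_one_iff_eq two_ne_zero, ← sq_eq_sq₀ (norm_nonneg _)
        zero_le_two, norm_ofReal_sub_of_re_eq_zero hb, hx, hq]
      ring
    have hfactor : ∀ z : ℂ, z ^ 2 + b * z - 1 = (z - (q - b) / 2) * (z - ((-q : ℝ) - b) / 2) := by
      intro z
      have hq' : (q : ℂ) ^ 2 = 4 - (‖b‖ ^ 2 : ℝ) := by exact_mod_cast hq
      linear_combination (norm := (push_cast; ring_nf))
        (1 / 4 : ℂ) * hq' - sq_eq_neg_norm_sq_of_re_eq_zero hb / 4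
    refine ⟨_, _, ?_, hunit q rfl, hunit (-q) (neg_sq q), fun z _ => ?_⟩
    · intro h
      have := congrArg re h
      simp only [div_ofNat_re, sub_re, ofReal_re] at this
      linarith
    · rw [hfactor, mul_eq_zero, sub_eq_zero, sub_eq_zero]

theorem standard_position_hyperbolic_iff (σ : ℝ) (hσ : σ ∈ Set.Ioo (0 : ℝ) 1)
    (τ : ℂ) (hτ : ‖τ‖ = 1) (hτne : τ ≠ -1)
    (m : ℂ → ℂ)
    (hm : ∀ z : ℂ, m z = ((τ * ((z - (σ : ℂ)) / (1 - (σ : ℂ) * z))) - (σ : ℂ)) /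
                  (1 - (σ : ℂ) * (τ * ((z - (σ : ℂ)) / (1 - (σ : ℂ) * z))))) :
    (∃ η₁ η₂ : ℂ, η₁ ≠ η₂ ∧ ‖η₁‖ = 1 ∧ ‖η₂‖ = 1 ∧
        ∀ z : ℂ, ‖z‖ ≤ 1 → (m z = z ↔ z = η₁ ∨ z = η₂)) ↔
      ‖(τ - 1) / (τ + 1)‖ < 2 * σ / (1 - σ ^ 2) := by
  obtain ⟨hσ0, hσ1⟩ := hσ
  have hσ2 : 0 < 1 - σ ^ 2 := by nlinarith
  have hσ' : (σ : ℂ) ≠ 0 := ofReal_ne_zero.mpr hσ0.ne'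
  have hτ' : τ + 1 ≠ 0 := fun h => hτne (eq_neg_of_add_eq_zero_left h)
  set b : ℂ := ((1 - σ ^ 2) / σ : ℝ) * ((τ - 1) / (τ + 1))
  have hb : b.re = 0 := by rw [re_ofReal_mul, re_sub_one_div_add_one hτ, mul_zero]
  have hfix : ∀ z : ℂ, ‖z‖ ≤ 1 → (m z = z ↔ z ^ 2 + b * z - 1 = 0) := fun z hz => by
    rw [hm z]
    change blaschkeFactor σ (τ * blaschkeFactor σ z) = z ↔ _
    rw [blaschkeFactor_mul_blaschkeFactor_eq_self_iff (abs_lt.mpr ⟨by linarith, hσ1⟩) hτ.le hz]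
    have : (σ : ℂ) * (τ + 1) * z ^ 2 + (1 - σ ^ 2) * (τ - 1) * z - σ * (τ + 1) =
        σ * (τ + 1) * (z ^ 2 + b * z - 1) := by
      simp only [b]; push_cast; field_simp
    rw [this, mul_eq_zero, or_iff_right (mul_ne_zero hσ' hτ')]
  have hnorm : ‖b‖ < 2 ↔ ‖(τ - 1) / (τ + 1)‖ < 2 * σ / (1 - σ ^ 2) := by
    rw [norm_mul, norm_real, Real.norm_of_nonneg (div_pos hσ2 hσ0).le,
      ← lt_div_iff₀' (div_pos hσ2 hσ0), div_div_eq_mul_div, mul_comm 2 σ]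
  rw [← hnorm, ← exists_two_unit_roots_iff hb]
  exact exists₂_congr fun η₁ η₂ => and_congr_right' <| and_congr_right' <| and_congr_right' <|
    forall₂_congr fun z hz => by rw [hfix z hz]
end
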